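/- Let K be a number field equipped with a ring homomorphism K → ℂ, and let A be a commutative K-algebra. Let ℂ ⊗_K A be the base change of A to ℂ, a ℂ-algebra, with the canonical ring homomorphism A → ℂ ⊗_K A, a ↦ 1 ⊗ a. Then the natural map on Kähler differentials Ω_{A/ℚ} → Ω_{(ℂ ⊗_K A)/ℂ}, induced by a ↦ 1 ⊗ a over the inclusion ℚ → ℂ, is injective. (This is the infinitesimal form, at the level of modules of differentials, of Beilinson's conjectured injectivity of the rational Chow groups of a smooth projective variety over a number field into the Deligne cohomology of its complexification.) -/

import Mathlib

/-! Since `K/ℚ` is separable, `Ω[K⁄ℚ] = 0`, and the exact sequence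
`A ⊗[K] Ω[K⁄ℚ] → Ω[A⁄ℚ] → Ω[A⁄K] → 0` makes `Ω[A⁄ℚ] → Ω[A⁄K]` injective.
Differentials commute with base change, `Ω[(ℂ ⊗[K] A)⁄ℂ] ≃ ℂ ⊗[K] Ω[A⁄K]`, and `M → ℂ ⊗[K] M`
is injective because `ℂ` is faithfully flat over the field `K`. -/

open scoped TensorProduct

attribute [local instance] Algebra.TensorProduct.rightAlgebra

noncomputable section

variable (K : Type*) [Field K] [NumberField K] [Algebra K ℂ] [IsScalarTower ℚ K ℂ]
variable (A : Type*) [CommRing A] [Algebra K A] [Algebra ℚ A] [IsScalarTower ℚ K A]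

instance : IsScalarTower ℚ A (ℂ ⊗[K] A) :=
  IsScalarTower.of_algebraMap_eq' (Subsingleton.elim _ _)

instance : SMulCommClass ℂ A (ℂ ⊗[K] A) :=
  ⟨fun c a x => by simp only [Algebra.smul_def, mul_left_comm]⟩

namespace KaehlerDifferential

theorem map_comp_map (R R' S A B : Type*) [CommRing R] [CommRing R'] [CommRing S]
    [CommRing A] [CommRing B] [Algebra R R'] [Algebra R S] [Algebra R' S]
    [Algebra R A] [Algebra R' A] [IsScalarTower R R' A] [Algebra A B] [Algebra S B]
    [Algebra R B] [Algebra R' B] [IsScalarTower R A B] [IsScalarTower R S B]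
    [IsScalarTower R' A B] [IsScalarTower R' S B] [SMulCommClass S A B] :
    (map R' S A B).comp (map R R' A A) = map R S A B := by
  ext a
  simp

theorem map_injective_of_formallyUnramified (R S B : Type*) [CommRing R] [CommRing S]
    [CommRing B] [Algebra R S] [Algebra R B] [Algebra S B] [IsScalarTower R S B]
    [Algebra.FormallyUnramified R S] :
    Function.Injective (map R S B B) := by
  rw [← LinearMap.exact_zero_iff_injective (B ⊗[S] Ω[S⁄R])]
  convert exact_mapBaseChange_map R S B
  exact Subsingleton.elim _ _

theorem map_injective_of_isPushout (R S A B : Type*) [CommRing R] [CommRing S]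
    [CommRing A] [CommRing B] [Algebra R S] [Algebra R A] [Algebra R B] [Algebra S B]
    [Algebra A B] [IsScalarTower R S B] [IsScalarTower R A B] [Algebra.IsPushout R S A B]
    [Module.FaithfullyFlat R S] :
    Function.Injective (map R S A B) := by
  convert (tensorKaehlerEquivBase R S A B).injective.comp
    (Module.FaithfullyFlat.tensorProduct_mk_injective (A := R) (B := S) Ω[A⁄R])
  ext x
  simp

end KaehlerDifferential

/-- Infinitesimal form of Beilinson's conjecture: for a number field `K` with an embedding
`K → ℂ` and a commutative `K`-algebra `A`, the natural map on Kähler differentials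
`Ω[A⁄ℚ] → Ω[(ℂ ⊗[K] A)⁄ℂ]` induced by `a ↦ 1 ⊗ a` over `ℚ → ℂ` is injective. -/
theorem kaehlerDifferential_map_to_baseChange_injective :
    Function.Injective (KaehlerDifferential.map ℚ ℂ A (ℂ ⊗[K] A)) := by
  have : Algebra.FormallyUnramified ℚ K := .of_isSeparable ℚ K
  rw [← KaehlerDifferential.map_comp_map ℚ K ℂ A (ℂ ⊗[K] A)]
  exact (KaehlerDifferential.map_injective_of_isPushout K ℂ A (ℂ ⊗[K] A)).comp
    (KaehlerDifferential.map_injective_of_formallyUnramified ℚ K A)
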